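/- arXiv:2311.18515 — 3 statements merged into one kernel-verified Lean document; each statement's English description precedes it below -/
import Mathlib

section
/- For each pair of positive integers n and positive real M, there are only finitely many algebraic integers α of degree n over ℚ that are totally positive (all real conjugates positive) and whose trace (sum of conjugates) is less than M. -/
open Polynomial

/-- For each `n ≥ 1` and `M > 0`, there are only finitely many algebraic
integers `α` of degree `n` over `ℚ` that are totally positive (all conjugates are real and
positive) and whose trace (the sum of the conjugates) is less than `M`. -/
theorem finitely_many_totally_positive_algebraic_integers_of_degree_and_trace_lt
    (n : ℕ) (hn : 0 < n) (M : ℝ) (hM : 0 < M) :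
    {α : ℂ | IsIntegral ℤ α ∧ (minpoly ℚ α).natDegree = n ∧
      (∀ z ∈ ((minpoly ℚ α).map (algebraMap ℚ ℂ)).roots, z.im = 0 ∧ 0 < z.re) ∧
      (((minpoly ℚ α).map (algebraMap ℚ ℂ)).roots.sum.re < M)}.Finite := by
  classical
  set C : ℤ := ((Nat.ceil (max M 1 ^ n * n.choose (n / 2)) : ℕ) : ℤ) with hC
  have hfin := Polynomial.bUnion_roots_finite (algebraMap ℤ ℂ) n
    (Set.finite_Icc (-C : ℤ) C)
  refine hfin.subset fun α hα => ?_
  obtain ⟨hint, hdeg, hpos, htr⟩ := hα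
  have hQint : IsIntegral ℚ α := hint.tower_top
  have h_map_ℚ_minpoly := minpoly.isIntegrallyClosed_eq_field_fractions' ℚ hint
  -- every root of the minimal polynomial has norm ≤ M
  have hroots : ∀ z ∈ ((minpoly ℚ α).map (algebraMap ℚ ℂ)).roots, ‖z‖ ≤ M := by
    intro z hz
    have him := (hpos z hz).1
    have hre := (hpos z hz).2
    have hz' : z = (z.re : ℂ) := Complex.ext (by simp) (by simp [him])
    have hnorm : ‖z‖ = z.re := by
      rw [hz', Complex.norm_real]
      simp [Real.norm_eq_abs, abs_of_pos hre]
    rw [hnorm]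
    -- z.re ≤ sum of real parts of roots < M
    have hsum : (((minpoly ℚ α).map (algebraMap ℚ ℂ)).roots.map Complex.re).sum
        = ((minpoly ℚ α).map (algebraMap ℚ ℂ)).roots.sum.re := by
      exact (map_multiset_sum Complex.reAddGroupHom _).symm
    have hle : z.re ≤ (((minpoly ℚ α).map (algebraMap ℚ ℂ)).roots.map Complex.re).sum := by
      refine Multiset.single_le_sum (fun x hx => ?_) z.re (Multiset.mem_map_of_mem _ hz)
      obtain ⟨w, hw, rfl⟩ := Multiset.mem_map.1 hx
      exact (hpos w hw).2.le
    exact le_of_lt (lt_of_le_of_lt (hle.trans_eq hsum) htr)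
  simp_rw [Set.mem_iUnion]
  refine ⟨minpoly ℤ α, ⟨?_, fun i => ?_⟩, ?_⟩
  · rw [← (minpoly.monic hint).natDegree_map (algebraMap ℤ ℚ), ← h_map_ℚ_minpoly, hdeg]
  · rw [Set.mem_Icc, ← abs_le, ← @Int.cast_le ℝ]
    have hbdd := Polynomial.coeff_bdd_of_roots_le (algebraMap ℚ ℂ) (minpoly.monic hQint)
      (IsAlgClosed.splits _) (le_of_eq hdeg) hroots i
    refine le_trans (le_of_eq ?_) (hbdd.trans (Nat.le_ceil _))
    rw [h_map_ℚ_minpoly, Polynomial.coeff_map, Polynomial.coeff_map, eq_intCast]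
    simp [map_intCast, Complex.norm_intCast]
  · rw [Finset.mem_coe, Multiset.mem_toFinset,
      Polynomial.mem_roots (Polynomial.map_monic_ne_zero (minpoly.monic hint))]
    simp only [Polynomial.IsRoot, Polynomial.eval_map, ← Polynomial.aeval_def]
    exact minpoly.aeval ℤ α
end

section
/- Let K be a totally real number field, 𝒪⁺ its totally positive integers, and d ≥ 2 a rational integer. For every δ ∈ 𝒪⁺, the number of partitions of δ into parts from 𝒪⁺ not divisible by d equals the number of partitions of δ into parts from 𝒪⁺ in which each part appears at most d − 1 times. -/
open scoped Classical

open NumberField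

/-- `x ∈ 𝓞 K` is totally positive if every real embedding of `K` sends it to a
positive real number. -/
def IsTotallyPositive (K : Type*) [Field K] [NumberField K] (x : 𝓞 K) : Prop :=
  ∀ φ : K →+* ℝ, 0 < φ (x : K)

/-!
Glaisher's bijection. A part of the form `d ^ k * μ` with `d ∤ μ` is split into `d ^ k` copies
of `μ`; this turns a partition with every multiplicity below `d` into a partition with no part
divisible by `d`, and it is inverted by reading the multiplicity of each `μ` in base `d`: its
`k`-th digit is the multiplicity of `d ^ k * μ`. The only arithmetic input is that every nonzero
integer of `K` is `d ^ k * μ` for a unique `k` and a unique `μ` not divisible by `d`, and that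
total positivity is insensitive to multiplying by `d`.
-/

open Finset

namespace Nat

theorem sum_range_pow_mul_lt_pow {d : ℕ} {c : ℕ → ℕ} (hc : ∀ j, c j < d) (k : ℕ) :
    ∑ j ∈ range k, d ^ j * c j < d ^ k := by
  induction k with
  | zero => simp
  | succ k ih =>
    calc ∑ j ∈ range (k + 1), d ^ j * c j
        < d ^ k + d ^ k * c k := by rw [sum_range_succ]; omega
      _ = d ^ k * (c k + 1) := by ring
      _ ≤ d ^ k * d := Nat.mul_le_mul_left _ (hc k)
      _ = d ^ (k + 1) := (pow_succ d k).symm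

theorem sum_range_pow_mul_div_pow_mod {d J k : ℕ} {c : ℕ → ℕ} (hc : ∀ j, c j < d)
    (hk : k < J) : (∑ j ∈ range J, d ^ j * c j) / d ^ k % d = c k := by
  obtain ⟨r, rfl⟩ := Nat.exists_eq_add_of_lt hk
  have hd : 0 < d := (Nat.zero_le _).trans_lt (hc 0)
  have hsplit : ∑ j ∈ range (k + r + 1), d ^ j * c j = ∑ j ∈ range k, d ^ j * c j +
      d ^ k * (c k + d * ∑ j ∈ range r, d ^ j * c (k + 1 + j)) := by
    rw [show k + r + 1 = k + 1 + r by omega, sum_range_add, sum_range_succ, mul_add, mul_sum,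
      mul_sum, add_assoc]
    congr 2
    exact sum_congr rfl fun j _ => by ring
  rw [hsplit, Nat.add_mul_div_left _ _ (pow_pos hd k),
    Nat.div_eq_of_lt (sum_range_pow_mul_lt_pow hc k), zero_add, Nat.add_mul_mod_self_left,
    Nat.mod_eq_of_lt (hc k)]

theorem sum_range_pow_mul_div_pow_mod_eq_mod (d c M : ℕ) :
    ∑ k ∈ range M, d ^ k * (c / d ^ k % d) = c % d ^ M := by
  induction M with
  | zero => simp [Nat.mod_one]
  | succ M ih => rw [sum_range_succ, ih, pow_succ, Nat.mod_mul]

end Nat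

theorem Multiset.count_map_lt_of_injective {α β : Type*} [DecidableEq α] [DecidableEq β]
    {f : α → β} (hf : Function.Injective f) {s : Multiset α} {n : ℕ} (hn : 0 < n)
    (hs : ∀ a, s.count a < n) (b : β) : (s.map f).count b < n := by
  by_cases hb : b ∈ s.map f
  · obtain ⟨a, -, rfl⟩ := Multiset.mem_map.1 hb
    rw [Multiset.count_map_eq_count' f s hf]
    exact hs a
  · rwa [Multiset.count_eq_zero_of_notMem hb]

section Multiplicity

variable {R : Type*}

noncomputable def multiplicityCofactor [Monoid R] (b x : R) : R :=
  (pow_multiplicity_dvd b x).choose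

noncomputable def multiplicityDecomp [Monoid R] (b x : R) : ℕ × R :=
  (multiplicity b x, multiplicityCofactor b x)

section Monoid

variable [Monoid R] {b x : R}

theorem pow_multiplicity_mul_multiplicityCofactor (b x : R) :
    b ^ multiplicity b x * multiplicityCofactor b x = x :=
  (pow_multiplicity_dvd b x).choose_spec.symm

theorem FiniteMultiplicity.not_dvd_multiplicityCofactor (h : FiniteMultiplicity b x) :
    ¬ b ∣ multiplicityCofactor b x := by
  rintro ⟨c, hc⟩
  refine h.not_pow_dvd_of_multiplicity_lt (Nat.lt_succ_self _) ⟨c, ?_⟩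
  rw [pow_succ, mul_assoc, ← hc, pow_multiplicity_mul_multiplicityCofactor]

theorem multiplicityDecomp_injective (b : R) : Function.Injective (multiplicityDecomp b) :=
  Function.LeftInverse.injective (g := fun p => b ^ p.1 * p.2)
    fun x => pow_multiplicity_mul_multiplicityCofactor b x

end Monoid

variable [CommMonoidWithZero R] [IsCancelMulZero R] {b μ : R}

theorem multiplicity_pow_mul_of_not_dvd (hb : b ≠ 0) (hμ : ¬ b ∣ μ) (k : ℕ) :
    multiplicity b (b ^ k * μ) = k :=
  multiplicity_eq_of_dvd_of_not_dvd (dvd_mul_right _ _) fun h =>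
    hμ (by rwa [pow_succ, mul_dvd_mul_iff_left (pow_ne_zero k hb)] at h)

theorem multiplicityDecomp_pow_mul_of_not_dvd (hb : b ≠ 0) (hμ : ¬ b ∣ μ) (k : ℕ) :
    multiplicityDecomp b (b ^ k * μ) = (k, μ) := by
  have hk := multiplicity_pow_mul_of_not_dvd hb hμ k
  have hspec := pow_multiplicity_mul_multiplicityCofactor b (b ^ k * μ)
  rw [hk] at hspec
  exact Prod.ext hk (mul_left_cancel₀ (pow_ne_zero k hb) hspec)

end Multiplicity

theorem pow_mul_mem_iff_of_mul_mem_iff {R : Type*} [Monoid R] {b : R} {P : Set R}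
    (hP : ∀ x, b * x ∈ P ↔ x ∈ P) (k : ℕ) (x : R) : b ^ k * x ∈ P ↔ x ∈ P := by
  induction k with
  | zero => rw [pow_zero, one_mul]
  | succ k ih => rw [pow_succ', mul_assoc, hP, ih]

namespace Glaisher

section Combinatorics

variable {α : Type*} (d : ℕ)

def expand (s : Multiset (ℕ × α)) : Multiset α :=
  s.bind fun p => Multiset.replicate (d ^ p.1) p.2

theorem sum_expand [AddCommMonoid α] (s : Multiset (ℕ × α)) :
    (expand d s).sum = (s.map fun p => d ^ p.1 • p.2).sum := by
  simp only [expand, Multiset.sum_bind, Multiset.sum_replicate]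

theorem mem_map_snd_of_mem_expand {s : Multiset (ℕ × α)} {a : α} (ha : a ∈ expand d s) :
    a ∈ s.map Prod.snd := by
  obtain ⟨p, hp, hap⟩ := Multiset.mem_bind.1 ha
  exact Multiset.mem_map.2 ⟨p, hp, (Multiset.eq_of_mem_replicate hap).symm⟩

variable [DecidableEq α]

theorem count_expand {s : Multiset (ℕ × α)} {J : ℕ} (hJ : ∀ p ∈ s, p.1 < J) (a : α) :
    (expand d s).count a = ∑ k ∈ range J, d ^ k * s.count (k, a) := by
  induction s using Multiset.induction_on with
  | empty => simp [expand]
  | cons p s ih =>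
    obtain ⟨k₀, b⟩ := p
    have hk₀ : k₀ ∈ range J := mem_range.2 (hJ _ (Multiset.mem_cons_self _ _))
    rw [expand, Multiset.cons_bind, ← expand, Multiset.count_add,
      ih fun q hq => hJ q (Multiset.mem_cons_of_mem hq)]
    by_cases hab : b = a
    · subst hab
      simp [Multiset.count_cons, mul_add, sum_add_distrib, hk₀, add_comm]
    · simp [Multiset.count_replicate, hab, Ne.symm hab]

-- The guard `p.1 < n.count p.2` only makes the support visibly finite: for `1 < d` the digit
-- vanishes there anyway (`count_contract`).
noncomputable def contract (n : Multiset α) : Multiset (ℕ × α) :=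
  Finsupp.toMultiset <| Finsupp.onFinset (range (Multiset.card n) ×ˢ n.toFinset)
    (fun p => if p.1 < n.count p.2 then n.count p.2 / d ^ p.1 % d else 0) fun p hp => by
      by_cases h : p.1 < n.count p.2
      swap
      · exact absurd (if_neg h) hp
      exact mem_product.2 ⟨mem_range.2 (h.trans_le (Multiset.count_le_card _ _)),
        Multiset.mem_toFinset.2 (Multiset.count_pos.1 ((Nat.zero_le _).trans_lt h))⟩

theorem fst_lt_count_of_mem_contract {n : Multiset α} {p : ℕ × α} (hp : p ∈ contract d n) :
    p.1 < n.count p.2 := by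
  rw [contract, Finsupp.mem_toMultiset, Finsupp.mem_support_iff, Finsupp.onFinset_apply] at hp
  by_contra h
  exact hp (if_neg h)

variable {d}

theorem count_contract (hd : 1 < d) (n : Multiset α) (p : ℕ × α) :
    (contract d n).count p = n.count p.2 / d ^ p.1 % d := by
  rw [contract, Finsupp.count_toMultiset, Finsupp.onFinset_apply]
  split_ifs with h
  · rfl
  · rw [Nat.div_eq_of_lt ((not_lt.1 h).trans_lt (Nat.lt_pow_self hd)), Nat.zero_mod]

theorem count_contract_lt (hd : 1 < d) (n : Multiset α) (p : ℕ × α) :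
    (contract d n).count p < d :=
  count_contract hd n p ▸ Nat.mod_lt _ (by omega)

theorem expand_contract (hd : 1 < d) (n : Multiset α) : expand d (contract d n) = n := by
  ext a
  have hJ : ∀ p ∈ contract d n, p.1 < Multiset.card n := fun p hp =>
    (fst_lt_count_of_mem_contract d hp).trans_le (Multiset.count_le_card _ _)
  simp only [count_expand d hJ, count_contract hd]
  rw [Nat.sum_range_pow_mul_div_pow_mod_eq_mod,
    Nat.mod_eq_of_lt ((Multiset.count_le_card a n).trans_lt (Nat.lt_pow_self hd))]

theorem count_eq_count_expand_div_pow_mod {s : Multiset (ℕ × α)} (hs : ∀ p, s.count p < d)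
    (k : ℕ) (a : α) : s.count (k, a) = (expand d s).count a / d ^ k % d := by
  have hJ : ∀ p ∈ s, p.1 < k + 1 + (s.map Prod.fst).sup := fun p hp => by
    have := Multiset.le_sup (Multiset.mem_map_of_mem Prod.fst hp)
    omega
  rw [count_expand d hJ, Nat.sum_range_pow_mul_div_pow_mod (fun j => hs (j, a)) (by omega)]

theorem expand_injOn : Set.InjOn (expand d) {s : Multiset (ℕ × α) | ∀ p, s.count p < d} := by
  intro s hs t ht h
  ext ⟨k, a⟩
  rw [count_eq_count_expand_div_pow_mod hs, count_eq_count_expand_div_pow_mod ht, h]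

end Combinatorics

section Partitions

variable {R : Type*} [CommSemiring R]

noncomputable def splitParts (d : ℕ) (m : Multiset R) : Multiset R :=
  expand d (m.map (multiplicityDecomp (d : R)))

theorem sum_splitParts (d : ℕ) (m : Multiset R) : (splitParts d m).sum = m.sum := by
  rw [splitParts, sum_expand, Multiset.map_map]
  conv_rhs => rw [← Multiset.map_id m]
  congr 1
  refine Multiset.map_congr rfl fun x _ => ?_
  simp only [Function.comp, multiplicityDecomp, nsmul_eq_mul, Nat.cast_pow, id,
    pow_multiplicity_mul_multiplicityCofactor]

theorem exists_eq_multiplicityCofactor_of_mem_splitParts {d : ℕ} {m : Multiset R} {x : R}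
    (hx : x ∈ splitParts d m) : ∃ y ∈ m, multiplicityCofactor (d : R) y = x := by
  have := mem_map_snd_of_mem_expand d hx
  rw [Multiset.map_map] at this
  exact Multiset.mem_map.1 this

variable [IsCancelMulZero R] {d : ℕ} {P : Set R}

theorem bijOn_splitParts (hd : 1 < d) (hd₀ : (d : R) ≠ 0)
    (hfin : ∀ x ∈ P, FiniteMultiplicity (d : R) x) (hP : ∀ x, (d : R) * x ∈ P ↔ x ∈ P)
    (δ : R) :
    Set.BijOn (splitParts d)
      {m : Multiset R | (∀ x ∈ m, x ∈ P) ∧ (∀ x, m.count x < d) ∧ m.sum = δ}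
      {n : Multiset R | (∀ x ∈ n, x ∈ P ∧ ¬ (d : R) ∣ x) ∧ n.sum = δ} := by
  refine ⟨?mapsTo, ?injOn, ?surjOn⟩
  case mapsTo =>
    rintro m ⟨hmP, -, rfl⟩
    refine ⟨fun x hx => ?_, sum_splitParts d m⟩
    obtain ⟨y, hy, rfl⟩ := exists_eq_multiplicityCofactor_of_mem_splitParts hx
    refine ⟨(pow_mul_mem_iff_of_mul_mem_iff hP (multiplicity (d : R) y) _).1 ?_,
      (hfin y (hmP y hy)).not_dvd_multiplicityCofactor⟩
    rw [pow_multiplicity_mul_multiplicityCofactor]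
    exact hmP y hy
  case injOn =>
    rintro m ⟨-, hm, -⟩ m' ⟨-, hm', -⟩ h
    have hinj := multiplicityDecomp_injective (d : R)
    exact Multiset.map_injective hinj <| expand_injOn
      (Multiset.count_map_lt_of_injective hinj (by omega) hm)
      (Multiset.count_map_lt_of_injective hinj (by omega) hm') h
  case surjOn =>
    rintro n ⟨hnP, rfl⟩
    have hmem : ∀ p ∈ contract d n, p.2 ∈ n := fun p hp =>
      Multiset.count_pos.1 ((Nat.zero_le _).trans_lt (fst_lt_count_of_mem_contract d hp))
    set m := (contract d n).map fun p => (d : R) ^ p.1 * p.2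
    have hdecomp : m.map (multiplicityDecomp (d : R)) = contract d n := by
      rw [Multiset.map_map]
      conv_rhs => rw [← Multiset.map_id (contract d n)]
      exact Multiset.map_congr rfl fun p hp =>
        show multiplicityDecomp (d : R) ((d : R) ^ p.1 * p.2) = (p.1, p.2) from
          multiplicityDecomp_pow_mul_of_not_dvd hd₀ (hnP _ (hmem p hp)).2 p.1
    have hsplit : splitParts d m = n := by rw [splitParts, hdecomp, expand_contract hd]
    refine ⟨m, ⟨fun x hx => ?_, fun x => ?_, ?_⟩, hsplit⟩
    · obtain ⟨p, hp, rfl⟩ := Multiset.mem_map.1 hx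
      exact (pow_mul_mem_iff_of_mul_mem_iff hP _ _).2 (hnP _ (hmem p hp)).1
    · rw [← Multiset.count_map_eq_count' _ _ (multiplicityDecomp_injective _), hdecomp]
      exact count_contract_lt hd n _
    · rw [← sum_splitParts d m, hsplit]

end Partitions

end Glaisher

theorem IsTotallyPositive.ne_zero {K : Type*} [Field K] [NumberField K]
    (hTR : ∀ φ : K →+* ℂ, ∀ x : K, (φ x).im = 0) {x : 𝓞 K} (hx : IsTotallyPositive K x) :
    x ≠ 0 := by
  obtain ⟨ψ⟩ : Nonempty (K →+* ℂ) := inferInstance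
  have hψ : ComplexEmbedding.IsReal ψ := ComplexEmbedding.isReal_iff.2 <|
    RingHom.ext fun y => Complex.conj_eq_iff_im.2 (hTR ψ y)
  rintro rfl
  simpa using hx hψ.embedding

theorem isTotallyPositive_natCast_mul_iff {K : Type*} [Field K] [NumberField K] {d : ℕ}
    (hd : 0 < d) (x : 𝓞 K) : IsTotallyPositive K (d * x) ↔ IsTotallyPositive K x := by
  refine forall_congr' fun φ => ?_
  show 0 < φ ((d * x : 𝓞 K) : K) ↔ 0 < φ (x : K)
  push_cast
  rw [map_mul, map_natCast]
  exact mul_pos_iff_of_pos_left (by exact_mod_cast hd)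

theorem NumberField.RingOfIntegers.not_isUnit_natCast (K : Type*) [Field K] [NumberField K]
    {d : ℕ} (hd : d ≠ 1) : ¬ IsUnit (d : 𝓞 K) := by
  intro h
  have := h.map (Algebra.norm ℤ)
  rw [← map_natCast (algebraMap ℤ (𝓞 K)), Algebra.norm_algebraMap,
    isUnit_pow_iff Module.finrank_pos.ne'] at this
  exact hd (by simpa [Int.isUnit_iff_natAbs_eq] using this)

theorem glaisher_totally_real_general
    (K : Type*) [Field K] [NumberField K]
    (hTR : ∀ φ : K →+* ℂ, ∀ x : K, (φ x).im = 0)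
    (d : ℕ) (hd : 2 ≤ d) (δ : 𝓞 K) :
    {m : Multiset (𝓞 K) |
        (∀ x ∈ m, IsTotallyPositive K x ∧ ¬ (d : 𝓞 K) ∣ x) ∧ m.sum = δ}.ncard =
    {m : Multiset (𝓞 K) |
        (∀ x ∈ m, IsTotallyPositive K x) ∧ (∀ x : 𝓞 K, m.count x ≤ d - 1) ∧
          m.sum = δ}.ncard := by
  have hcount : ∀ m : Multiset (𝓞 K), (∀ x, m.count x ≤ d - 1) ↔ ∀ x, m.count x < d :=
    fun m => forall_congr' fun x => Nat.le_sub_one_iff_lt (by omega)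
  simp_rw [hcount]
  refine (Glaisher.bijOn_splitParts (P := {x | IsTotallyPositive K x}) hd
    (Nat.cast_ne_zero.2 (by omega)) (fun x hx => ?_)
    (isTotallyPositive_natCast_mul_iff (by omega)) δ).ncard_eq.symm
  exact FiniteMultiplicity.of_not_isUnit
    (RingOfIntegers.not_isUnit_natCast K (by omega)) (hx.ne_zero hTR)

/-- Glaisher over totally real fields: for `d ≥ 2` and totally positive `δ`,
the number of partitions of `δ` into totally positive parts not divisible by `d` equals
the number of partitions of `δ` into totally positive parts each repeated at most `d − 1`
times. -/
theorem glaisher_totally_real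
    (K : Type*) [Field K] [NumberField K]
    (hTR : ∀ φ : K →+* ℂ, ∀ x : K, (φ x).im = 0)
    (d : ℕ) (hd : 2 ≤ d) (δ : 𝓞 K) (hδ : IsTotallyPositive K δ) :
    {m : Multiset (𝓞 K) |
        (∀ x ∈ m, IsTotallyPositive K x ∧ ¬ (d : 𝓞 K) ∣ x) ∧ m.sum = δ}.ncard =
    {m : Multiset (𝓞 K) |
        (∀ x ∈ m, IsTotallyPositive K x) ∧ (∀ x : 𝓞 K, m.count x ≤ d - 1) ∧
          m.sum = δ}.ncard :=
  glaisher_totally_real_general K hTR d hd δ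
end

section
/- Let K be a totally real number field and 𝒪⁺ its totally positive integers. For every δ ∈ 𝒪⁺, the number of partitions of δ into parts from 𝒪⁺ not divisible by 2 equals the number of partitions of δ into distinct parts from 𝒪⁺. -/
/-!
Glaisher's bijection. In a domain where `2` is a nonzero nonunit of finite multiplicity, every
nonzero `x` is uniquely `2 ^ k * μ` with `2 ∤ μ`. Splitting each part `2 ^ k * μ` of a partition
into distinct parts into `2 ^ k` copies of `μ` gives a partition into odd parts; conversely, the
binary expansion `∑ 2 ^ k` of the multiplicity of an odd part `μ` recovers the distinct parts
`2 ^ k * μ`. Total positivity is invariant under multiplication by `2` and excludes `0` once `K`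
has a real embedding, so the bijection restricts to totally positive parts.
-/

open NumberField

open Multiset

section OddPart

variable {R : Type*} [CommSemiring R]

/-- When `2` has infinite multiplicity in `x` (e.g. `x = 0`), `multiplicity 2 x = 0` and
`oddPart x = x`. -/
noncomputable def oddPart (x : R) : R :=
  (pow_multiplicity_dvd 2 x).choose

theorem two_pow_multiplicity_mul_oddPart (x : R) : 2 ^ multiplicity 2 x * oddPart x = x :=
  (pow_multiplicity_dvd 2 x).choose_spec.symm

theorem two_pow_mul_iff_of_two_mul_iff {P : R → Prop} (hP : ∀ x, P (2 * x) ↔ P x) (k : ℕ)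
    (x : R) : P (2 ^ k * x) ↔ P x := by
  induction k generalizing x with
  | zero => rw [pow_zero, one_mul]
  | succ k ih => rw [pow_succ, mul_assoc, ih, hP]

theorem not_two_dvd_oddPart [IsCancelMulZero R] [WfDvdMonoid R] (h2 : ¬IsUnit (2 : R)) {x : R}
    (hx : x ≠ 0) : ¬2 ∣ oddPart x := by
  rintro ⟨c, hc⟩
  refine (FiniteMultiplicity.of_not_isUnit h2 hx).not_pow_dvd_of_multiplicity_lt
    (Nat.lt_succ_self _) ⟨c, ?_⟩
  rw [pow_succ, mul_assoc, ← hc, two_pow_multiplicity_mul_oddPart]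

variable [IsCancelMulZero R] [NeZero (2 : R)] {μ ν : R}

theorem multiplicity_two_pow_mul (hμ : ¬2 ∣ μ) (k : ℕ) : multiplicity 2 (2 ^ k * μ) = k :=
  multiplicity_eq_of_dvd_of_not_dvd (dvd_mul_right _ _) <| by
    rwa [pow_succ, mul_dvd_mul_iff_left (pow_ne_zero k two_ne_zero)]

theorem oddPart_two_pow_mul (hμ : ¬2 ∣ μ) (k : ℕ) : oddPart (2 ^ k * μ) = μ := by
  have h := two_pow_multiplicity_mul_oddPart (2 ^ k * μ)
  rw [multiplicity_two_pow_mul hμ] at h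
  exact mul_left_cancel₀ (pow_ne_zero k two_ne_zero) h

theorem two_pow_mul_inj (hμ : ¬2 ∣ μ) (hν : ¬2 ∣ ν) {k j : ℕ} :
    2 ^ k * μ = 2 ^ j * ν ↔ k = j ∧ μ = ν := by
  refine ⟨fun h => ⟨?_, ?_⟩, fun ⟨hk, hμν⟩ => hk ▸ hμν ▸ rfl⟩
  · simpa only [multiplicity_two_pow_mul hμ, multiplicity_two_pow_mul hν]
      using congrArg (multiplicity 2) h
  · simpa only [oddPart_two_pow_mul hμ, oddPart_two_pow_mul hν] using congrArg oddPart h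

end OddPart

section Glaisher

variable {R : Type*} [CommSemiring R]

noncomputable def glaisher (m : Multiset R) : Multiset R :=
  m.bind fun x => replicate (2 ^ multiplicity 2 x) (oddPart x)

theorem sum_glaisher (m : Multiset R) : (glaisher m).sum = m.sum := by
  simp only [glaisher, sum_bind, sum_replicate, nsmul_eq_mul, Nat.cast_pow, Nat.cast_ofNat,
    two_pow_multiplicity_mul_oddPart, map_id']

theorem mem_glaisher {m : Multiset R} {y : R} : y ∈ glaisher m ↔ ∃ x ∈ m, oddPart x = y := by
  simp only [glaisher, mem_bind, mem_replicate, (Nat.two_pow_pos _).ne', ne_eq, not_false_eq_true,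
    true_and, eq_comm]

theorem glaisher_map_bitIndices [IsCancelMulZero R] [NeZero (2 : R)] {μ : R} (hμ : ¬2 ∣ μ)
    (n : ℕ) : glaisher ((n.bitIndices : Multiset ℕ).map (2 ^ · * μ)) = replicate n μ := by
  simp only [glaisher, bind_map, multiplicity_two_pow_mul hμ, oddPart_two_pow_mul hμ]
  rw [eq_replicate, card_bind]
  refine ⟨?_, fun b hb => ?_⟩
  · simp only [Function.comp_def, card_replicate, map_coe, sum_coe, Nat.sum_map_two_pow_bitIndices]
  · obtain ⟨k, -, hb⟩ := mem_bind.1 hb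
    exact eq_of_mem_replicate hb

section DecidableEq

variable [DecidableEq R]

noncomputable def twoMultiplicities (s : Finset R) (μ : R) : Finset ℕ :=
  {x ∈ s | oddPart x = μ}.image (multiplicity 2)

theorem mem_iff_multiplicity_mem_twoMultiplicities {s : Finset R} {x : R} :
    x ∈ s ↔ multiplicity 2 x ∈ twoMultiplicities s (oddPart x) := by
  refine ⟨fun hx => Finset.mem_image_of_mem _ (Finset.mem_filter.2 ⟨hx, rfl⟩), fun hx => ?_⟩
  obtain ⟨y, hy, hyx⟩ := Finset.mem_image.1 hx
  rw [Finset.mem_filter] at hy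
  have hyx : y = x := by
    rw [← two_pow_multiplicity_mul_oddPart x, ← hyx, ← hy.2, two_pow_multiplicity_mul_oddPart]
  exact hyx ▸ hy.1

theorem count_glaisher (s : Finset R) (μ : R) :
    count μ (glaisher s.val) = ∑ k ∈ twoMultiplicities s μ, 2 ^ k := by
  rw [glaisher, count_bind, twoMultiplicities, Finset.sum_image]
  · simp only [count_replicate, ← Finset.sum_eq_multiset_sum, Finset.sum_filter, eq_comm]
  · intro x hx y hy h
    rw [Finset.mem_coe, Finset.mem_filter] at hx hy
    rw [← two_pow_multiplicity_mul_oddPart x, h, hx.2, ← hy.2, two_pow_multiplicity_mul_oddPart]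

end DecidableEq

theorem injective_glaisher_val : Function.Injective fun s : Finset R => glaisher s.val := by
  classical
  intro s t h
  have hst (μ : R) : twoMultiplicities s μ = twoMultiplicities t μ :=
    Finset.geomSum_injective le_rfl <| by
      simpa only [count_glaisher] using congrArg (count μ) h
  ext x
  rw [mem_iff_multiplicity_mem_twoMultiplicities (s := s),
    mem_iff_multiplicity_mem_twoMultiplicities (s := t), hst]

theorem injOn_glaisher : Set.InjOn glaisher {m : Multiset R | m.Nodup} :=
  fun m hm n hn h => congrArg Finset.val (injective_glaisher_val (a₁ := ⟨m, hm⟩) (a₂ := ⟨n, hn⟩) h)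

variable [DecidableEq R]

noncomputable def glaisherInv (m : Multiset R) : Multiset R :=
  m.toFinset.val.bind fun μ => ((m.count μ).bitIndices : Multiset ℕ).map (2 ^ · * μ)

theorem exists_two_pow_mul_of_mem_glaisherInv {m : Multiset R} {y : R} (hy : y ∈ glaisherInv m) :
    ∃ μ ∈ m, ∃ k : ℕ, 2 ^ k * μ = y := by
  obtain ⟨μ, hμ, hy⟩ := mem_bind.1 hy
  obtain ⟨k, -, rfl⟩ := mem_map.1 hy
  exact ⟨μ, mem_toFinset.1 hμ, k, rfl⟩

variable [IsCancelMulZero R] [NeZero (2 : R)]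

theorem glaisher_glaisherInv {m : Multiset R} (hm : ∀ μ ∈ m, ¬2 ∣ μ) :
    glaisher (glaisherInv m) = m := by
  calc glaisher (glaisherInv m)
      = m.toFinset.val.bind fun μ => replicate (m.count μ) μ := by
        rw [glaisherInv, glaisher, bind_assoc]
        exact Multiset.bind_congr fun μ hμ => glaisher_map_bitIndices (hm μ (mem_toFinset.1 hμ)) _
    _ = ∑ μ ∈ m.toFinset, m.count μ • {μ} := by
        simp only [Finset.sum_eq_multiset_sum, nsmul_singleton]
        rfl
    _ = m := toFinset_sum_count_nsmul_eq m

theorem nodup_glaisherInv {m : Multiset R} (hm : ∀ μ ∈ m, ¬2 ∣ μ) : (glaisherInv m).Nodup := by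
  rw [glaisherInv, nodup_bind]
  refine ⟨fun μ hμ => ?_, m.toFinset.nodup.pairwise fun μ hμ ν hν hμν => ?_⟩
  · have hμ := hm μ (mem_toFinset.1 hμ)
    exact Nodup.map_on (fun k _ j _ h => ((two_pow_mul_inj hμ hμ).1 h).1)
      (coe_nodup.2 Nat.bitIndices_nodup)
  · rw [Function.onFun, disjoint_left]
    rintro _ hx hx'
    obtain ⟨k, -, rfl⟩ := mem_map.1 hx
    obtain ⟨j, -, h⟩ := mem_map.1 hx'
    exact hμν ((two_pow_mul_inj (hm ν (mem_toFinset.1 hν)) (hm μ (mem_toFinset.1 hμ))).1 h).2.symm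

end Glaisher

section Partitions

variable {R : Type*} [CommSemiring R]

def oddPartitions (P : R → Prop) (δ : R) : Set (Multiset R) :=
  {m | (∀ x ∈ m, P x ∧ ¬2 ∣ x) ∧ m.sum = δ}

def distinctPartitions (P : R → Prop) (δ : R) : Set (Multiset R) :=
  {m | (∀ x ∈ m, P x) ∧ m.Nodup ∧ m.sum = δ}

variable [IsCancelMulZero R] [NeZero (2 : R)] [WfDvdMonoid R] {P : R → Prop}

theorem image_glaisher_distinctPartitions (h2 : ¬IsUnit (2 : R)) (hP0 : ¬P 0)
    (hP2 : ∀ x, P (2 * x) ↔ P x) (δ : R) :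
    glaisher '' distinctPartitions P δ = oddPartitions P δ := by
  classical
  ext m
  constructor
  · rintro ⟨m, ⟨hm, -, rfl⟩, rfl⟩
    refine ⟨fun y hy => ?_, sum_glaisher m⟩
    obtain ⟨x, hx, rfl⟩ := mem_glaisher.1 hy
    have hx0 : x ≠ 0 := fun h => hP0 (h ▸ hm x hx)
    refine ⟨(two_pow_mul_iff_of_two_mul_iff hP2 (multiplicity 2 x) _).1 ?_,
      not_two_dvd_oddPart h2 hx0⟩
    rw [two_pow_multiplicity_mul_oddPart]
    exact hm x hx
  · rintro ⟨hm, rfl⟩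
    have hodd (μ : R) (hμ : μ ∈ m) : ¬2 ∣ μ := (hm μ hμ).2
    refine ⟨glaisherInv m, ⟨fun y hy => ?_, nodup_glaisherInv hodd, ?_⟩, glaisher_glaisherInv hodd⟩
    · obtain ⟨μ, hμ, k, rfl⟩ := exists_two_pow_mul_of_mem_glaisherInv hy
      exact (two_pow_mul_iff_of_two_mul_iff hP2 k μ).2 (hm μ hμ).1
    · rw [← sum_glaisher, glaisher_glaisherInv hodd]

theorem ncard_oddPartitions_eq_ncard_distinctPartitions (h2 : ¬IsUnit (2 : R)) (hP0 : ¬P 0)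
    (hP2 : ∀ x, P (2 * x) ↔ P x) (δ : R) :
    (oddPartitions P δ).ncard = (distinctPartitions P δ).ncard := by
  rw [← image_glaisher_distinctPartitions h2 hP0 hP2,
    (injOn_glaisher.mono fun _ hm => hm.2.1).ncard_image]

end Partitions

section TotallyReal

variable {K : Type*} [Field K] [NumberField K]

variable (K) in
theorem NumberField.RingOfIntegers.not_isUnit_two : ¬IsUnit (2 : 𝓞 K) := by
  intro h
  obtain ⟨u, hu⟩ := h.exists_right_inv
  have hu : algebraMap ℚ K (1 / 2) = u := by
    have := congrArg (algebraMap (𝓞 K) K) hu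
    rw [map_mul, map_ofNat, map_one] at this
    rw [map_div₀, map_one, map_ofNat]
    exact (eq_one_div_of_mul_eq_one_right this).symm
  have hint : IsIntegral ℤ (algebraMap ℚ K (1 / 2)) := by rw [hu]; exact u.isIntegral_coe
  rw [isIntegral_algebraMap_iff (algebraMap ℚ K).injective,
    IsIntegrallyClosed.isIntegral_iff] at hint
  obtain ⟨n, hn⟩ := hint
  have : (n : ℚ) * 2 = 1 := by rw [eq_intCast] at hn; rw [hn]; norm_num
  norm_cast at this
  omega

theorem nonempty_ringHom_real_of_forall_im_eq_zero (hK : ∀ φ : K →+* ℂ, ∀ x : K, (φ x).im = 0) :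
    Nonempty (K →+* ℝ) :=
  ⟨ComplexEmbedding.IsReal.embedding (φ := Classical.arbitrary _) <|
    ComplexEmbedding.isReal_iff.2 <| RingHom.ext fun x => Complex.conj_eq_iff_im.2 (hK _ x)⟩

theorem not_isTotallyPositive_zero [Nonempty (K →+* ℝ)] : ¬IsTotallyPositive K 0 :=
  fun h => (h (Classical.arbitrary _)).ne' (by simp)

theorem isTotallyPositive_two_mul_iff {x : 𝓞 K} :
    IsTotallyPositive K (2 * x) ↔ IsTotallyPositive K x := by
  refine forall_congr' fun φ => ?_
  rw [show ((2 * x : 𝓞 K) : K) = 2 * (x : K) by norm_cast, map_mul, map_ofNat]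
  exact mul_pos_iff_of_pos_left two_pos

end TotallyReal

theorem euler_totally_real_general
    (K : Type*) [Field K] [NumberField K]
    (hTR : ∀ φ : K →+* ℂ, ∀ x : K, (φ x).im = 0)
    (δ : 𝓞 K) :
    {m : Multiset (𝓞 K) |
        (∀ x ∈ m, IsTotallyPositive K x ∧ ¬ (2 : 𝓞 K) ∣ x) ∧ m.sum = δ}.ncard =
    {m : Multiset (𝓞 K) |
        (∀ x ∈ m, IsTotallyPositive K x) ∧ m.Nodup ∧ m.sum = δ}.ncard := by
  have := nonempty_ringHom_real_of_forall_im_eq_zero hTR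
  exact ncard_oddPartitions_eq_ncard_distinctPartitions (RingOfIntegers.not_isUnit_two K)
    not_isTotallyPositive_zero (fun _ => isTotallyPositive_two_mul_iff) δ

/-- Euler over totally real fields: the number of partitions of a totally
positive `δ` into totally positive parts not divisible by `2` equals the number of
partitions of `δ` into distinct totally positive parts. -/
theorem euler_totally_real
    (K : Type*) [Field K] [NumberField K]
    (hTR : ∀ φ : K →+* ℂ, ∀ x : K, (φ x).im = 0)
    (δ : 𝓞 K) (hδ : IsTotallyPositive K δ) :
    {m : Multiset (𝓞 K) |
        (∀ x ∈ m, IsTotallyPositive K x ∧ ¬ (2 : 𝓞 K) ∣ x) ∧ m.sum = δ}.ncard =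
    {m : Multiset (𝓞 K) |
        (∀ x ∈ m, IsTotallyPositive K x) ∧ m.Nodup ∧ m.sum = δ}.ncard :=
  euler_totally_real_general K hTR δ
end
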